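/- For any policy π with value function V^π_{P_s} under kernel P_s, any kernel P_t, and ε = max_s |E_{a∼π, s'∼P_t}[r(s,a,s') + γ V^π_{P_s}(s') − V^π_{P_s}(s)]|: J^π_{P_t} ≥ J^π_{P_s} + (1/(1−γ)) · ( E_{s∼d^π_{P_s}, a∼π(·|s), s'∼P_s(·|s,a)}[ (P_t(s'|s,a)/P_s(s'|s,a)) · (r(s,a,s') + γ V^π_{P_s}(s') − V^π_{P_s}(s)) ] − 2ε · D_TV(d^π_{P_s}, d^π_{P_t}) ). -/

import Mathlib

open scoped BigOperators

section MDP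

variable {S A : Type*} [Fintype S] [Fintype A] [DecidableEq S]

/-- One-step state distribution update under kernel `P` and policy `π`. -/
noncomputable def stepDist (P : S → A → S → ℝ) (π : S → A → ℝ) (ρ : S → ℝ) : S → ℝ :=
  fun s => ∑ s' : S, ∑ a : A, ρ s' * π s' a * P s' a s

/-- Distribution of the state at time `t`. -/
noncomputable def stateDist (P : S → A → S → ℝ) (π : S → A → ℝ) (ρ₀ : S → ℝ) : ℕ → S → ℝ
  | 0 => ρ₀
  | t + 1 => stepDist P π (stateDist P π ρ₀ t)

/-- Discounted state visitation distribution `d^π_P`. -/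
noncomputable def visitS (γ : ℝ) (P : S → A → S → ℝ) (π : S → A → ℝ) (ρ₀ : S → ℝ) : S → ℝ :=
  fun s => (1 - γ) * ∑' t : ℕ, γ ^ t * stateDist P π ρ₀ t s

/-- Discounted state-action visitation distribution `μ^π_P`. -/
noncomputable def visitSA (γ : ℝ) (P : S → A → S → ℝ) (π : S → A → ℝ) (ρ₀ : S → ℝ) :
    S × A → ℝ :=
  fun x => (1 - γ) * ∑' t : ℕ, γ ^ t * stateDist P π ρ₀ t x.1 * π x.1 x.2

/-- Discounted transition (state-action-next-state) visitation distribution `ν^π_P`. -/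
noncomputable def visitT (γ : ℝ) (P : S → A → S → ℝ) (π : S → A → ℝ) (ρ₀ : S → ℝ) :
    S × A × S → ℝ :=
  fun x => (1 - γ) * ∑' t : ℕ, γ ^ t * stateDist P π ρ₀ t x.1 * π x.1 x.2.1 * P x.1 x.2.1 x.2.2

/-- Expected discounted return starting from initial distribution `ρ₀`. -/
noncomputable def ret (γ : ℝ) (r : S → A → S → ℝ) (P : S → A → S → ℝ) (π : S → A → ℝ)
    (ρ₀ : S → ℝ) : ℝ :=
  ∑' t : ℕ, γ ^ t *
    ∑ s : S, ∑ a : A, ∑ s' : S, stateDist P π ρ₀ t s * π s a * P s a s' * r s a s'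

/-- Value function `V^π_P`. -/
noncomputable def valueFn (γ : ℝ) (r : S → A → S → ℝ) (P : S → A → S → ℝ) (π : S → A → ℝ) :
    S → ℝ :=
  fun s => ret γ r P π (fun s'' => if s'' = s then 1 else 0)

/-- Expected discounted return `J^π_P = E_{ρ₀}[V^π_P]`. -/
noncomputable def expRet (γ : ℝ) (r : S → A → S → ℝ) (P : S → A → S → ℝ) (π : S → A → ℝ)
    (ρ₀ : S → ℝ) : ℝ :=
  ∑ s : S, ρ₀ s * valueFn γ r P π s

/-- Total variation distance `(1/2) ∑ |p - q|`. -/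
noncomputable def tvDist {X : Type*} [Fintype X] (p q : X → ℝ) : ℝ :=
  (1 / 2) * ∑ x : X, |p x - q x|

/-- Kullback–Leibler divergence on a finite set. -/
noncomputable def klDiv' {X : Type*} [Fintype X] (p q : X → ℝ) : ℝ :=
  ∑ x : X, p x * Real.log (p x / q x)

/-- Jensen–Shannon divergence on a finite set. -/
noncomputable def jsDiv {X : Type*} [Fintype X] (p q : X → ℝ) : ℝ :=
  (1 / 2) * klDiv' p (fun x => (p x + q x) / 2) +
    (1 / 2) * klDiv' q (fun x => (p x + q x) / 2)

/-- `π` is a stochastic policy. -/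
def IsStochPol (π : S → A → ℝ) : Prop :=
  ∀ s, (∀ a, 0 ≤ π s a) ∧ ∑ a : A, π s a = 1

/-- `P` is a stochastic transition kernel. -/
def IsStochKer (P : S → A → S → ℝ) : Prop :=
  ∀ s a, (∀ s', 0 ≤ P s a s') ∧ ∑ s' : S, P s a s' = 1

/-- `p` is a probability mass function. -/
def IsProb {X : Type*} [Fintype X] (p : X → ℝ) : Prop :=
  (∀ x, 0 ≤ p x) ∧ ∑ x : X, p x = 1

end MDP

/-! For any `V : S → ℝ`, the one-step Bellman residual `g_V` of the chain driven by `P`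
telescopes along the chain, which gives the performance-difference identity
`J^π_P = E_{ρ₀}[V] + (1 - γ)⁻¹ E_{d^π_P}[g_V]`. Take `P = P_t` and `V = V^π_{P_s}`. Importance
weighting rewrites the reweighted `d^π_{P_s}`-expectation as `E_{d^π_{P_s}}[g_V]`, and trading
`d^π_{P_t}` for `d^π_{P_s}` costs at most `sup |g_V| · ‖d^π_{P_s} - d^π_{P_t}‖₁ = 2 ε D_TV`. -/

open Finset

section FiniteDistribution

variable {X : Type*} [Fintype X] {p : X → ℝ}

lemma IsProb.le_one (hp : IsProb p) (x : X) : p x ≤ 1 :=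
  hp.2 ▸ single_le_sum (fun i _ => hp.1 i) (mem_univ x)

lemma IsProb.abs_le_one (hp : IsProb p) (x : X) : |p x| ≤ 1 :=
  (abs_of_nonneg (hp.1 x)).trans_le (hp.le_one x)

lemma IsProb.abs_sum_mul_le (hp : IsProb p) (f : X → ℝ) :
    |∑ x, p x * f x| ≤ ∑ x, |f x| :=
  (abs_sum_le_sum_abs _ _).trans <| sum_le_sum fun x _ => by
    rw [abs_mul]
    exact mul_le_of_le_one_left (abs_nonneg _) (hp.abs_le_one x)

lemma sum_mul_sub_sum_mul_le_two_mul_tvDist {g : X → ℝ} {ε : ℝ} (hg : ∀ x, |g x| ≤ ε)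
    (p q : X → ℝ) : ∑ x, p x * g x - ∑ x, q x * g x ≤ 2 * ε * tvDist p q := by
  calc ∑ x, p x * g x - ∑ x, q x * g x = ∑ x, (p x - q x) * g x := by
        rw [← sum_sub_distrib]; simp only [sub_mul]
    _ ≤ ∑ x, |p x - q x| * ε := sum_le_sum fun x _ => by
        calc (p x - q x) * g x ≤ |(p x - q x) * g x| := le_abs_self _
          _ ≤ |p x - q x| * ε := by rw [abs_mul]; gcongr; exact hg x
    _ = 2 * ε * tvDist p q := by rw [tvDist, ← sum_mul]; ring

end FiniteDistribution

section MarkovChain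

variable {S A : Type*} [Fintype S] [Fintype A] {P : S → A → S → ℝ} {π : S → A → ℝ}

lemma stepDist_eq_sum_mul (P : S → A → S → ℝ) (π : S → A → ℝ) (ρ : S → ℝ) (s : S) :
    stepDist P π ρ s = ∑ s', ρ s' * ∑ a, π s' a * P s' a s := by
  simp only [stepDist, mul_sum, mul_assoc]

lemma sum_sum_policy_mul_kernel (hπ : IsStochPol π) (hP : IsStochKer P) (s : S) :
    ∑ a, ∑ s', π s a * P s a s' = 1 := by
  simp only [← mul_sum, (hP s _).2, mul_one, (hπ s).2]

lemma IsProb.stepDist {ρ : S → ℝ} (hρ : IsProb ρ) (hπ : IsStochPol π) (hP : IsStochKer P) :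
    IsProb (stepDist P π ρ) := by
  refine ⟨fun s => ?_, ?_⟩
  · rw [stepDist_eq_sum_mul]
    exact sum_nonneg fun s' _ => mul_nonneg (hρ.1 s') <|
      sum_nonneg fun a _ => mul_nonneg ((hπ s').1 a) ((hP s' a).1 s)
  · simp_rw [stepDist_eq_sum_mul]
    rw [sum_comm]
    simp_rw [← mul_sum]
    conv_lhs => enter [2, s', 2]; rw [sum_comm, sum_sum_policy_mul_kernel hπ hP s']
    simpa using hρ.2

lemma IsProb.stateDist {ρ₀ : S → ℝ} (hρ : IsProb ρ₀) (hπ : IsStochPol π) (hP : IsStochKer P) :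
    ∀ t, IsProb (stateDist P π ρ₀ t)
  | 0 => hρ
  | t + 1 => (hρ.stateDist hπ hP t).stepDist hπ hP

lemma stepDist_sum_mul {ι : Type*} (s₀ : Finset ι) (c : ι → ℝ) (ρ : ι → S → ℝ) (s : S) :
    stepDist P π (fun x => ∑ i ∈ s₀, c i * ρ i x) s = ∑ i ∈ s₀, c i * stepDist P π (ρ i) s := by
  simp only [stepDist_eq_sum_mul, sum_mul]
  rw [sum_comm]
  simp only [mul_sum, mul_assoc]

lemma sum_stepDist_mul (ρ f : S → ℝ) :
    ∑ s, stepDist P π ρ s * f s = ∑ s, ρ s * ∑ a, ∑ s', π s a * P s a s' * f s' := by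
  simp only [stepDist_eq_sum_mul, sum_mul, mul_sum]
  rw [sum_comm]
  refine sum_congr rfl fun _ _ => ?_
  rw [sum_comm]
  simp only [mul_assoc]

lemma sum_mul_stateDist_ite [DecidableEq S] (ρ₀ : S → ℝ) (t : ℕ) (s : S) :
    ∑ s₀, ρ₀ s₀ * stateDist P π (fun x => if x = s₀ then 1 else 0) t s = stateDist P π ρ₀ t s := by
  induction t generalizing s with
  | zero => simp [stateDist]
  | succ t ih =>
    simp only [stateDist]
    rw [← stepDist_sum_mul]
    exact congrArg (stepDist P π · s) (funext ih)

end MarkovChain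

lemma summable_pow_mul_of_abs_le {γ : ℝ} (hγ0 : 0 ≤ γ) (hγ1 : γ < 1) {c : ℕ → ℝ} {C : ℝ}
    (hc : ∀ t, |c t| ≤ C) : Summable fun t => γ ^ t * c t :=
  .of_norm_bounded ((summable_geometric_of_lt_one hγ0 hγ1).mul_right C) fun t => by
    rw [Real.norm_eq_abs, abs_mul, abs_pow, abs_of_nonneg hγ0]
    exact mul_le_mul_of_nonneg_left (hc t) (pow_nonneg hγ0 t)

lemma tsum_succ_sub {b : ℕ → ℝ} (hb : Summable b) : ∑' t, (b (t + 1) - b t) = -b 0 := by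
  rw [((summable_nat_add_iff 1).2 hb).tsum_sub hb, hb.tsum_eq_zero_add]
  ring

section Return

variable {S A : Type*} [Fintype S] [Fintype A] {γ : ℝ} {r P : S → A → S → ℝ} {π : S → A → ℝ}
  {ρ₀ : S → ℝ}

noncomputable def expectedReward (r P : S → A → S → ℝ) (π : S → A → ℝ) (s : S) : ℝ :=
  ∑ a, ∑ s', π s a * P s a s' * r s a s'

noncomputable def bellmanResidual (γ : ℝ) (r P : S → A → S → ℝ) (π : S → A → ℝ) (V : S → ℝ)
    (s : S) : ℝ :=
  ∑ a, ∑ s', π s a * P s a s' * (r s a s' + γ * V s' - V s)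

lemma ret_eq_tsum (γ : ℝ) (r P : S → A → S → ℝ) (π : S → A → ℝ) (ρ₀ : S → ℝ) :
    ret γ r P π ρ₀ = ∑' t, γ ^ t * ∑ s, stateDist P π ρ₀ t s * expectedReward r P π s := by
  simp only [ret, expectedReward, mul_sum, mul_assoc]

lemma summable_pow_mul_sum_stateDist_mul (hγ0 : 0 ≤ γ) (hγ1 : γ < 1) (hπ : IsStochPol π)
    (hP : IsStochKer P) (hρ : IsProb ρ₀) (f : S → ℝ) :
    Summable fun t => γ ^ t * ∑ s, stateDist P π ρ₀ t s * f s :=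
  summable_pow_mul_of_abs_le hγ0 hγ1 fun t => (hρ.stateDist hπ hP t).abs_sum_mul_le f

lemma expRet_eq_ret [DecidableEq S] (hγ0 : 0 ≤ γ) (hγ1 : γ < 1) (hπ : IsStochPol π)
    (hP : IsStochKer P) (ρ₀ : S → ℝ) : expRet γ r P π ρ₀ = ret γ r P π ρ₀ := by
  set R := expectedReward r P π
  set δ : S → S → ℝ := fun s₀ x => if x = s₀ then 1 else 0
  have hδ : ∀ s₀, IsProb (δ s₀) := fun s₀ => ⟨fun x => by positivity, by simp [δ]⟩
  calc expRet γ r P π ρ₀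
      = ∑ s₀, ρ₀ s₀ * ∑' t, γ ^ t * ∑ s, stateDist P π (δ s₀) t s * R s := by
        simp only [expRet, valueFn, ret_eq_tsum, R, δ]
    _ = ∑' t, ∑ s₀, ρ₀ s₀ * (γ ^ t * ∑ s, stateDist P π (δ s₀) t s * R s) := by
        rw [Summable.tsum_finsetSum fun s₀ _ =>
          (summable_pow_mul_sum_stateDist_mul hγ0 hγ1 hπ hP (hδ s₀) R).mul_left (ρ₀ s₀)]
        simp only [tsum_mul_left]
    _ = ∑' t, γ ^ t * ∑ s, stateDist P π ρ₀ t s * R s := by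
        refine tsum_congr fun t => ?_
        simp_rw [← sum_mul_stateDist_ite ρ₀ t, sum_mul, mul_sum]
        rw [sum_comm]
        exact sum_congr rfl fun _ _ => sum_congr rfl fun _ _ => by ring
    _ = ret γ r P π ρ₀ := (ret_eq_tsum γ r P π ρ₀).symm

lemma bellmanResidual_eq (hπ : IsStochPol π) (hP : IsStochKer P) (V : S → ℝ) (s : S) :
    bellmanResidual γ r P π V s =
      expectedReward r P π s + γ * ∑ a, ∑ s', π s a * P s a s' * V s' - V s := by
  have hV : ∑ a, ∑ s', π s a * P s a s' * V s = V s := by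
    simp only [← sum_mul, sum_sum_policy_mul_kernel hπ hP s, one_mul]
  rw [← hV, mul_sum]
  simp only [bellmanResidual, expectedReward, mul_sum, ← sum_add_distrib, ← sum_sub_distrib]
  exact sum_congr rfl fun _ _ => sum_congr rfl fun _ _ => by ring

lemma sum_mul_bellmanResidual (hπ : IsStochPol π) (hP : IsStochKer P) (ρ V : S → ℝ) :
    ∑ s, ρ s * bellmanResidual γ r P π V s =
      ∑ s, ρ s * expectedReward r P π s + γ * ∑ s, stepDist P π ρ s * V s - ∑ s, ρ s * V s := by
  simp only [bellmanResidual_eq hπ hP, sum_stepDist_mul, mul_add, mul_sub, sum_add_distrib,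
    sum_sub_distrib, mul_sum, mul_left_comm (ρ _) γ]

lemma tsum_pow_mul_sum_stateDist_mul_bellmanResidual (hγ0 : 0 ≤ γ) (hγ1 : γ < 1)
    (hπ : IsStochPol π) (hP : IsStochKer P) (hρ : IsProb ρ₀) (V : S → ℝ) :
    ∑' t, γ ^ t * ∑ s, stateDist P π ρ₀ t s * bellmanResidual γ r P π V s =
      ret γ r P π ρ₀ - ∑ s, ρ₀ s * V s := by
  set b : ℕ → ℝ := fun t => γ ^ t * ∑ s, stateDist P π ρ₀ t s * V s
  have hb := summable_pow_mul_sum_stateDist_mul hγ0 hγ1 hπ hP hρ V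
  have hR := summable_pow_mul_sum_stateDist_mul hγ0 hγ1 hπ hP hρ (expectedReward r P π)
  calc ∑' t, γ ^ t * ∑ s, stateDist P π ρ₀ t s * bellmanResidual γ r P π V s
      = ∑' t, (γ ^ t * ∑ s, stateDist P π ρ₀ t s * expectedReward r P π s + (b (t + 1) - b t)) := by
        refine tsum_congr fun t => ?_
        simp only [b, sum_mul_bellmanResidual hπ hP, stateDist, pow_succ]
        ring
    _ = ret γ r P π ρ₀ - ∑ s, ρ₀ s * V s := by
        rw [hR.tsum_add (((summable_nat_add_iff 1).2 hb).sub hb), tsum_succ_sub hb, ret_eq_tsum]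
        simp only [pow_zero, stateDist, one_mul]
        ring

lemma sum_visitS_mul (hγ0 : 0 ≤ γ) (hγ1 : γ < 1) (hπ : IsStochPol π) (hP : IsStochKer P)
    (hρ : IsProb ρ₀) (g : S → ℝ) :
    ∑ s, visitS γ P π ρ₀ s * g s = (1 - γ) * ∑' t, γ ^ t * ∑ s, stateDist P π ρ₀ t s * g s := by
  have hsummable (s : S) : Summable fun t => γ ^ t * (stateDist P π ρ₀ t s * g s) :=
    summable_pow_mul_of_abs_le hγ0 hγ1 fun t => by
      rw [abs_mul]
      exact mul_le_of_le_one_left (abs_nonneg _) ((hρ.stateDist hπ hP t).abs_le_one s)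
  simp only [visitS, mul_assoc, ← tsum_mul_right, ← mul_sum]
  rw [← Summable.tsum_finsetSum fun s _ => hsummable s]
  simp only [mul_sum]

theorem ret_eq_sum_mul_add_sum_visitS_mul_bellmanResidual (hγ0 : 0 ≤ γ) (hγ1 : γ < 1)
    (hπ : IsStochPol π) (hP : IsStochKer P) (hρ : IsProb ρ₀) (V : S → ℝ) :
    ret γ r P π ρ₀ =
      ∑ s, ρ₀ s * V s + (1 - γ)⁻¹ * ∑ s, visitS γ P π ρ₀ s * bellmanResidual γ r P π V s := by
  rw [sum_visitS_mul hγ0 hγ1 hπ hP hρ,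
    tsum_pow_mul_sum_stateDist_mul_bellmanResidual hγ0 hγ1 hπ hP hρ,
    inv_mul_cancel_left₀ (sub_ne_zero.2 hγ1.ne')]
  ring

end Return

lemma sum_mul_importance_weight {S A : Type*} [Fintype S] [Fintype A] {π : S → A → ℝ}
    {Ps Pt : S → A → S → ℝ} (hPt : IsStochKer Pt)
    (habs : ∀ s a s', 0 < Pt s a s' → 0 < Ps s a s') (w : S → ℝ) (δ : S → A → S → ℝ) :
    ∑ s, ∑ a, ∑ s', w s * π s a * Ps s a s' * (Pt s a s' / Ps s a s' * δ s a s') =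
      ∑ s, w s * ∑ a, ∑ s', π s a * Pt s a s' * δ s a s' := by
  simp only [mul_sum]
  refine sum_congr rfl fun s _ => sum_congr rfl fun a _ => sum_congr rfl fun s' _ => ?_
  have hzero : Ps s a s' = 0 → Pt s a s' = 0 := fun h =>
    le_antisymm (not_lt.1 fun hpos => (habs s a s' hpos).ne' h) ((hPt s a).1 s')
  calc w s * π s a * Ps s a s' * (Pt s a s' / Ps s a s' * δ s a s')
      = w s * π s a * (Ps s a s' * (Pt s a s' / Ps s a s')) * δ s a s' := by ring
    _ = w s * (π s a * Pt s a s' * δ s a s') := by rw [mul_div_cancel_of_imp' hzero]; ring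

theorem stmt10_general {S A : Type*} [Fintype S] [Fintype A] [DecidableEq S]
    (γ : ℝ) (hγ0 : 0 ≤ γ) (hγ1 : γ < 1)
    (r Ps Pt : S → A → S → ℝ) (π : S → A → ℝ) (ρ₀ : S → ℝ)
    (hπ : IsStochPol π) (hPt : IsStochKer Pt) (hρ : IsProb ρ₀)
    (habs : ∀ s a s', 0 < Pt s a s' → 0 < Ps s a s')
    (ε : ℝ)
    (hε : ε = ⨆ s : S, |∑ a : A, ∑ s' : S, π s a * Pt s a s' *
        (r s a s' + γ * valueFn γ r Ps π s' - valueFn γ r Ps π s)|) :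
    expRet γ r Pt π ρ₀ ≥
      expRet γ r Ps π ρ₀ +
        (1 / (1 - γ)) *
          ((∑ s : S, ∑ a : A, ∑ s' : S,
              visitS γ Ps π ρ₀ s * π s a * Ps s a s' *
                ((Pt s a s' / Ps s a s') *
                  (r s a s' + γ * valueFn γ r Ps π s' - valueFn γ r Ps π s))) -
            2 * ε * tvDist (visitS γ Ps π ρ₀) (visitS γ Pt π ρ₀)) := by
  set V := valueFn γ r Ps π
  set g := bellmanResidual γ r Pt π V
  have hg (s : S) : |g s| ≤ ε :=
    hε ▸ le_ciSup (f := fun s => |g s|) (Set.finite_range _).bddAbove s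
  have hperf : expRet γ r Pt π ρ₀ =
      expRet γ r Ps π ρ₀ + (1 - γ)⁻¹ * ∑ s, visitS γ Pt π ρ₀ s * g s := by
    rw [expRet_eq_ret hγ0 hγ1 hπ hPt,
      ret_eq_sum_mul_add_sum_visitS_mul_bellmanResidual hγ0 hγ1 hπ hPt hρ V]
    rfl
  have hweight : ∑ s, ∑ a, ∑ s', visitS γ Ps π ρ₀ s * π s a * Ps s a s' *
      (Pt s a s' / Ps s a s' * (r s a s' + γ * V s' - V s)) = ∑ s, visitS γ Ps π ρ₀ s * g s :=
    sum_mul_importance_weight hPt habs _ _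
  have hshift := sum_mul_sub_sum_mul_le_two_mul_tvDist hg (visitS γ Ps π ρ₀) (visitS γ Pt π ρ₀)
  rw [hperf, hweight, one_div, ge_iff_le]
  gcongr
  linarith

theorem stmt10 {S A : Type*} [Fintype S] [Fintype A] [DecidableEq S] [Nonempty S]
    (γ : ℝ) (hγ0 : 0 ≤ γ) (hγ1 : γ < 1)
    (r Ps Pt : S → A → S → ℝ) (π : S → A → ℝ) (ρ₀ : S → ℝ)
    (hπ : IsStochPol π) (hPs : IsStochKer Ps) (hPt : IsStochKer Pt) (hρ : IsProb ρ₀)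
    (habs : ∀ s a s', 0 < Pt s a s' → 0 < Ps s a s')
    (ε : ℝ)
    (hε : ε = ⨆ s : S, |∑ a : A, ∑ s' : S, π s a * Pt s a s' *
        (r s a s' + γ * valueFn γ r Ps π s' - valueFn γ r Ps π s)|) :
    expRet γ r Pt π ρ₀ ≥
      expRet γ r Ps π ρ₀ +
        (1 / (1 - γ)) *
          ((∑ s : S, ∑ a : A, ∑ s' : S,
              visitS γ Ps π ρ₀ s * π s a * Ps s a s' *
                ((Pt s a s' / Ps s a s') *
                  (r s a s' + γ * valueFn γ r Ps π s' - valueFn γ r Ps π s))) -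
            2 * ε * tvDist (visitS γ Ps π ρ₀) (visitS γ Pt π ρ₀)) :=
  stmt10_general γ hγ0 hγ1 r Ps Pt π ρ₀ hπ hPt hρ habs ε hε
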